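/- With ω := exp(−2πi/3), ι := i/√3, σ := exp(πi/6)/√3, a := [[ω,0],[0,ω²]], b := [[σ, conj(ι)],[ι, conj(σ)]], c := [[ι, ι],[conj(ι), conj(ι)]] (2×2 complex matrices given by rows), and ρ(x) := a x a⁻¹, the following hold: (1) a + b + c = 0; (2) M₂ = a⊗a⊗a + b⊗b⊗b + ρ(b)⊗ρ(b)⊗ρ(b) + ρ²(b)⊗ρ²(b)⊗ρ²(b) + (c⊗ρ(c)⊗ρ²(c) + ρ(c)⊗ρ²(c)⊗c + ρ²(c)⊗c⊗ρ(c)). -/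

import Mathlib

open scoped TensorProduct
open Matrix Complex

noncomputable section

abbrev M2 := Matrix (Fin 2) (Fin 2) ℂ
abbrev W2 := M2 ⊗[ℂ] (M2 ⊗[ℂ] M2)

/-- matrix units -/
def E (i j : Fin 2) : M2 := Matrix.single i j 1

/-- the 2×2 matrix multiplication tensor -/
def MatMul2 : W2 :=
  ∑ i : Fin 2, ∑ j : Fin 2, ∑ k : Fin 2, E i j ⊗ₜ[ℂ] (E j k ⊗ₜ[ℂ] E k i)

/-- ω = exp(-2πi/3) -/
def ω : ℂ := Complex.exp (-(2 * Real.pi * Complex.I) / 3)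

/-- ι = i/√3 -/
def ι : ℂ := Complex.I / (Real.sqrt 3 : ℂ)

/-- σ = exp(πi/6)/√3 -/
def σ : ℂ := Complex.exp (Real.pi * Complex.I / 6) / (Real.sqrt 3 : ℂ)

def a : M2 := !![ω, 0; 0, ω ^ 2]
def b : M2 := !![σ, starRingEnd ℂ ι; ι, starRingEnd ℂ σ]
def c : M2 := !![ι, ι; starRingEnd ℂ ι, starRingEnd ℂ ι]

/-- ρ(x) = a x a⁻¹ -/
def ρ (x : M2) : M2 := a * x * a⁻¹


/-!
Every entry of `a`, `b`, `c` lies in `ℚ(ω)`: `ι = -(2ω + 1)/3`, `σ = (1 - ω)/3`, and conjugation by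
`a = diag(ω, ω²)` multiplies the off-diagonal entries by `ω²` and `ω`. Expanding both sides of the
tensor identity in the basis `E i j ⊗ E k l ⊗ E m n` therefore reduces it to 64 identities between
polynomials in `ω` with rational coefficients, which hold modulo `ω² + ω + 1`.
-/

lemma ofReal_sqrt_three_sq : ((√3 : ℝ) : ℂ) ^ 2 = 3 := by
  rw [← ofReal_pow, Real.sq_sqrt (by norm_num)]
  norm_num

lemma ω_eq : ω = -(1 + I * √3) / 2 := by
  have h : -(2 * (Real.pi : ℂ) * I) / 3 = ((-(2 * Real.pi / 3) : ℝ) : ℂ) * I := by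
    push_cast
    ring
  rw [ω, h, exp_mul_I, ← ofReal_cos, ← ofReal_sin, Real.cos_neg, Real.sin_neg,
    show 2 * Real.pi / 3 = Real.pi - Real.pi / 3 by ring, Real.cos_pi_sub, Real.sin_pi_sub,
    Real.cos_pi_div_three, Real.sin_pi_div_three]
  push_cast
  ring

lemma ω_sq_add_ω_add_one : ω ^ 2 + ω + 1 = 0 := by
  rw [ω_eq]
  linear_combination (I ^ 2 / 4) * ofReal_sqrt_three_sq + (3 / 4 : ℂ) * I_sq

lemma ω_pow_three : ω ^ 3 = 1 := by
  linear_combination (ω - 1) * ω_sq_add_ω_add_one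

lemma ι_eq : ι = -(2 * ω + 1) / 3 := by
  have h : ((√3 : ℝ) : ℂ) ≠ 0 := ofReal_ne_zero.mpr (by positivity)
  rw [ι, ω_eq]
  field_simp
  linear_combination (-I) * ofReal_sqrt_three_sq

lemma σ_eq : σ = (1 - ω) / 3 := by
  have h : ((√3 : ℝ) : ℂ) ≠ 0 := ofReal_ne_zero.mpr (by positivity)
  have h' : (Real.pi : ℂ) * I / 6 = ((Real.pi / 6 : ℝ) : ℂ) * I := by
    push_cast
    ring
  rw [σ, ω_eq, h', exp_mul_I, ← ofReal_cos, ← ofReal_sin, Real.cos_pi_div_six,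
    Real.sin_pi_div_six]
  push_cast
  field_simp
  linear_combination (-I) * ofReal_sqrt_three_sq

lemma conj_ι : starRingEnd ℂ ι = (2 * ω + 1) / 3 := by
  have h : starRingEnd ℂ ι = -ι := by simp [ι, map_div₀, conj_I, conj_ofReal, neg_div]
  rw [h, ι_eq]
  ring

lemma conj_σ : starRingEnd ℂ σ = (2 + ω) / 3 := by
  rw [σ_eq, ω_eq]
  simp [map_div₀, map_ofNat, conj_I, conj_ofReal]
  ring

lemma b_eq : b = !![(1 - ω) / 3, (2 * ω + 1) / 3; -(2 * ω + 1) / 3, (2 + ω) / 3] := by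
  rw [b, conj_ι, conj_σ, σ_eq, ι_eq]

lemma c_eq : c = !![-(2 * ω + 1) / 3, -(2 * ω + 1) / 3; (2 * ω + 1) / 3, (2 * ω + 1) / 3] := by
  rw [c, conj_ι, ι_eq]

lemma a_add_b_add_c : a + b + c = 0 := by
  rw [a, b_eq, c_eq]
  ext i j
  fin_cases i <;> fin_cases j <;> simp <;> grind [ω_sq_add_ω_add_one]

lemma inv_a : a⁻¹ = !![ω ^ 2, 0; 0, ω] := by
  have h₁ : ω * ω ^ 2 = 1 := by linear_combination ω_pow_three
  have h₂ : ω ^ 2 * ω = 1 := by linear_combination ω_pow_three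
  apply inv_eq_right_inv
  rw [a, mul_fin_two, one_fin_two]
  simp only [mul_zero, zero_mul, add_zero, zero_add, h₁, h₂]

lemma ρ_of (p q r s : ℂ) : ρ !![p, q; r, s] = !![p, ω ^ 2 * q; ω * r, s] := by
  rw [ρ, inv_a, a, mul_fin_two, mul_fin_two]
  ext i j
  fin_cases i <;> fin_cases j <;> simp <;> grind [ω_pow_three]

lemma of_eq_sum_smul_E (p q r s : ℂ) :
    !![p, q; r, s] = p • E 0 0 + q • E 0 1 + r • E 1 0 + s • E 1 1 := by
  ext i j
  fin_cases i <;> fin_cases j <;> simp [E]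

/-- The diagonalized form of the Strassen decomposition. -/
theorem strassen_diagonalized :
    a + b + c = 0 ∧
    MatMul2 =
      a ⊗ₜ[ℂ] (a ⊗ₜ[ℂ] a) + b ⊗ₜ[ℂ] (b ⊗ₜ[ℂ] b) + ρ b ⊗ₜ[ℂ] (ρ b ⊗ₜ[ℂ] ρ b) +
        ρ (ρ b) ⊗ₜ[ℂ] (ρ (ρ b) ⊗ₜ[ℂ] ρ (ρ b)) +
        (c ⊗ₜ[ℂ] (ρ c ⊗ₜ[ℂ] ρ (ρ c)) + ρ c ⊗ₜ[ℂ] (ρ (ρ c) ⊗ₜ[ℂ] c) +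
          ρ (ρ c) ⊗ₜ[ℂ] (c ⊗ₜ[ℂ] ρ c)) := by
  refine ⟨a_add_b_add_c, ?_⟩
  rw [b_eq, c_eq]
  simp only [ρ_of]
  rw [MatMul2, a]
  simp only [Fin.sum_univ_two, of_eq_sum_smul_E, TensorProduct.tmul_add, TensorProduct.add_tmul,
    TensorProduct.tmul_smul, ← TensorProduct.smul_tmul']
  match_scalars <;> grind [ω_sq_add_ω_add_one]
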